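/- Let A be a commutative unital topological algebra over ℂ. If for each continuous seminorm p there exist a continuous seminorm q and s > 0 with ∑_{n≥1} s^n ‖π_n‖_{p,q} < ∞ (where π_n(x)=x^n), then A satisfies condition (*): for each continuous seminorm p there exist a continuous seminorm q and r > 0 with ∑_{n≥1} r^n ‖μ_n‖_{p,q} < ∞. -/

import Mathlib

/-!
Polarization: `n! x₁⋯xₙ = ∑_{S ⊆ {1,…,n}} (-1)^{n-|S|} (∑_{i ∈ S} xᵢ)ⁿ`. If every `xᵢ` lies in
the closed `q`-unit ball, so does each `yₛ = n⁻¹ ∑_{i ∈ S} xᵢ`, and the identity expresses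
`n! x₁⋯xₙ` through the `2ⁿ` powers `nⁿ yₛⁿ`. Hence `n! ‖μₙ‖ ≤ (2n)ⁿ ‖πₙ‖`, and as
`nⁿ ≤ eⁿ n! ≤ 3ⁿ n!` this gives `‖μₙ‖ ≤ 6ⁿ ‖πₙ‖`, so `r = s / 6` works.
-/

open scoped ENNReal

noncomputable def muNorm {𝕜 A : Type*} [NormedField 𝕜] [Ring A] [Module 𝕜 A]
    (p q : Seminorm 𝕜 A) (n : ℕ) : ℝ≥0∞ :=
  ⨆ x : {x : Fin n → A // ∀ i, q (x i) ≤ 1}, ENNReal.ofReal (p (List.ofFn x.1).prod)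

noncomputable def piNorm {A : Type*} [CommRing A] [Algebra ℂ A]
    (p q : Seminorm ℂ A) (n : ℕ) : ℝ≥0∞ :=
  ⨆ x : {x : A // q x ≤ 1}, ENNReal.ofReal (p (x.1 ^ n))

open Finset Function Nat

theorem Finset.sum_superset_neg_one_pow_card_compl {α : Type*} [Fintype α] [DecidableEq α]
    (R : Finset α) : ∑ S with R ⊆ S, (-1 : ℤ) ^ #Sᶜ = if R = univ then 1 else 0 := by
  have : ∑ S with R ⊆ S, (-1 : ℤ) ^ #Sᶜ = ∑ T ∈ Rᶜ.powerset, (-1 : ℤ) ^ #T :=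
    sum_nbij' compl compl (by simp) (by simp [subset_compl_comm]) (by simp) (by simp) (by simp)
  simp only [this, sum_powerset_neg_one_pow_card, compl_eq_empty_iff]

theorem Fintype.card_filter_surjective {α : Type*} [Fintype α] [DecidableEq α] :
    #{g : α → α | Surjective g} = (Fintype.card α)! := by
  rw [← Fintype.card_perm, ← Fintype.card_subtype]
  simp_rw [Finite.surjective_iff_bijective]
  exact Fintype.card_congr Equiv.bijectiveEquiv

theorem Finset.sum_neg_one_pow_card_compl_smul_sum_pow {R : Type*} [CommRing R] (n : ℕ)
    (x : Fin n → R) :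
    ∑ S : Finset (Fin n), (-1 : ℤ) ^ #Sᶜ • (∑ i ∈ S, x i) ^ n = n ! • ∏ i, x i := by
  calc ∑ S : Finset (Fin n), (-1 : ℤ) ^ #Sᶜ • (∑ i ∈ S, x i) ^ n
      = ∑ S : Finset (Fin n), ∑ g : Fin n → Fin n,
          (if image g univ ⊆ S then (-1 : ℤ) ^ #Sᶜ else 0) • ∏ j, x (g j) := by
        refine sum_congr rfl fun S _ => ?_
        have hpi :
            Fintype.piFinset (fun _ => S) = ({g | image g univ ⊆ S} : Finset (Fin n → _)) := by
          ext g; simp [image_subset_iff]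
        rw [sum_pow', smul_sum, hpi, sum_filter]
        simp only [ite_smul, zero_smul]
    _ = ∑ g : Fin n → Fin n, (∑ S with image g univ ⊆ S, (-1 : ℤ) ^ #Sᶜ) • ∏ j, x (g j) := by
        rw [sum_comm]
        simp only [← sum_smul, sum_filter]
    _ = ∑ g : Fin n → Fin n, (if Surjective g then ∏ i, x i else 0) := by
        refine sum_congr rfl fun g _ => ?_
        rw [sum_superset_neg_one_pow_card_compl]
        by_cases hg : Surjective g
        · rw [if_pos (image_univ_of_surjective hg), if_pos hg, one_smul]
          exact Fintype.prod_bijective g hg.bijective_of_finite _ _ fun _ => rfl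
        · rw [if_neg hg, ite_smul, one_smul, zero_smul, ite_eq_right_iff]
          intro h
          exact (hg (by simpa [← coe_inj, Set.range_eq_univ] using h)).elim
    _ = n ! • ∏ i, x i := by
        rw [← sum_filter, sum_const, Fintype.card_filter_surjective, Fintype.card_fin]

theorem Nat.pow_self_le_three_pow_mul_factorial (n : ℕ) : n ^ n ≤ 3 ^ n * n ! := by
  have h := Real.pow_div_factorial_le_exp (n : ℝ) (Nat.cast_nonneg n) n
  rw [div_le_iff₀ (by positivity), ← Real.exp_one_pow] at h
  have h3 : Real.exp 1 ^ n * n ! ≤ 3 ^ n * n ! := by gcongr; exact Real.exp_one_lt_three.le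
  exact_mod_cast h.trans h3

namespace Seminorm

variable {𝕜 A : Type*} [RCLike 𝕜] [CommRing A] [Algebra 𝕜 A]

theorem factorial_mul_prod_le (p : Seminorm 𝕜 A) {n : ℕ} (x : Fin n → A) :
    n ! * p (∏ i, x i) ≤
      ∑ S : Finset (Fin n), (n : ℝ) ^ n * p (((n : 𝕜)⁻¹ • ∑ i ∈ S, x i) ^ n) := by
  have sign (k : ℕ) (y : A) : p ((-1 : ℤ) ^ k • y) = p y := by
    rcases neg_one_pow_eq_or ℤ k with h | h <;> simp [h]
  have rescale (y : A) : y ^ n = (n : 𝕜) ^ n • ((n : 𝕜)⁻¹ • y) ^ n := by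
    rcases eq_or_ne n 0 with rfl | hn
    · simp
    · rw [smul_pow, smul_smul, ← mul_pow, mul_inv_cancel₀ (Nat.cast_ne_zero.2 hn), one_pow,
        one_smul]
  calc n ! * p (∏ i, x i)
      = p (∑ S : Finset (Fin n), (-1 : ℤ) ^ #Sᶜ • (∑ i ∈ S, x i) ^ n) := by
        rw [sum_neg_one_pow_card_compl_smul_sum_pow, ← Nat.cast_smul_eq_nsmul 𝕜,
          map_smul_eq_mul, RCLike.norm_natCast]
    _ ≤ ∑ S : Finset (Fin n), p ((-1 : ℤ) ^ #Sᶜ • (∑ i ∈ S, x i) ^ n) :=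
        le_sum_of_subadditive p (map_zero p).le (map_add_le_add p) _ _
    _ = ∑ S : Finset (Fin n), (n : ℝ) ^ n * p (((n : 𝕜)⁻¹ • ∑ i ∈ S, x i) ^ n) := by
        refine sum_congr rfl fun S _ => ?_
        rw [sign, rescale, map_smul_eq_mul, norm_pow, RCLike.norm_natCast]

theorem inv_natCast_smul_sum_le_one (q : Seminorm 𝕜 A) {n : ℕ} {x : Fin n → A}
    (hx : ∀ i, q (x i) ≤ 1) (S : Finset (Fin n)) : q ((n : 𝕜)⁻¹ • ∑ i ∈ S, x i) ≤ 1 := by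
  have hsum : q (∑ i ∈ S, x i) ≤ n :=
    calc q (∑ i ∈ S, x i) ≤ ∑ i ∈ S, q (x i) :=
          le_sum_of_subadditive q (map_zero q).le (map_add_le_add q) _ _
      _ ≤ #S := by simpa using sum_le_sum fun i (_ : i ∈ S) => hx i
      _ ≤ n := by exact_mod_cast card_le_univ S |>.trans_eq (Fintype.card_fin n)
  rw [map_smul_eq_mul, norm_inv, RCLike.norm_natCast]
  rcases eq_or_ne n 0 with rfl | hn
  · simp
  · rw [inv_mul_le_iff₀ (by positivity), mul_one]
    exact hsum

end Seminorm

section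
variable {A : Type*} [CommRing A] [Algebra ℂ A]

theorem muNorm_mul_factorial_le (p q : Seminorm ℂ A) (n : ℕ) :
    muNorm p q n * n ! ≤ (2 * n) ^ n * piNorm p q n := by
  rw [muNorm, ENNReal.iSup_mul]
  refine iSup_le fun ⟨x, hx⟩ => ?_
  calc ENNReal.ofReal (p (List.ofFn x).prod) * n !
      = ENNReal.ofReal (n ! * p (∏ i, x i)) := by
        rw [List.prod_ofFn, ENNReal.ofReal_mul (by positivity), ENNReal.ofReal_natCast, mul_comm]
    _ ≤ ENNReal.ofReal
          (∑ S : Finset (Fin n), (n : ℝ) ^ n * p (((n : ℂ)⁻¹ • ∑ i ∈ S, x i) ^ n)) :=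
        ENNReal.ofReal_le_ofReal (p.factorial_mul_prod_le x)
    _ = ∑ S : Finset (Fin n), (n : ℝ≥0∞) ^ n *
          ENNReal.ofReal (p (((n : ℂ)⁻¹ • ∑ i ∈ S, x i) ^ n)) := by
        rw [ENNReal.ofReal_sum_of_nonneg fun _ _ => by positivity]
        simp only [ENNReal.ofReal_mul (by positivity : (0 : ℝ) ≤ (n : ℝ) ^ n),
          ENNReal.ofReal_pow (Nat.cast_nonneg n), ENNReal.ofReal_natCast]
    _ ≤ ∑ _S : Finset (Fin n), (n : ℝ≥0∞) ^ n * piNorm p q n := by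
        gcongr with S
        exact le_iSup_of_le (⟨_, q.inv_natCast_smul_sum_le_one hx S⟩ : {y : A // q y ≤ 1}) le_rfl
    _ = (2 * n) ^ n * piNorm p q n := by
        rw [sum_const, Finset.card_univ, Fintype.card_finset, Fintype.card_fin, nsmul_eq_mul,
          mul_pow, ← mul_assoc]
        push_cast
        rfl

theorem muNorm_le_six_pow_mul_piNorm (p q : Seminorm ℂ A) (n : ℕ) :
    muNorm p q n ≤ 6 ^ n * piNorm p q n := by
  have hfac : (2 * n) ^ n ≤ 6 ^ n * n ! := by
    rw [mul_pow, show 6 ^ n = 2 ^ n * 3 ^ n by rw [← mul_pow]; rfl, mul_assoc]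
    exact Nat.mul_le_mul_left _ (Nat.pow_self_le_three_pow_mul_factorial n)
  rw [← ENNReal.mul_le_mul_iff_left (by positivity : (n ! : ℝ≥0∞) ≠ 0)
    (ENNReal.natCast_ne_top _)]
  calc muNorm p q n * n ! ≤ (2 * n) ^ n * piNorm p q n := muNorm_mul_factorial_le p q n
    _ ≤ 6 ^ n * n ! * piNorm p q n := by gcongr; exact_mod_cast hfac
    _ = 6 ^ n * piNorm p q n * n ! := mul_right_comm _ _ _

end

theorem stmt4_general {A : Type*} [CommRing A] [Algebra ℂ A] [TopologicalSpace A]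
    (hpi : ∀ p : Seminorm ℂ A, Continuous p → ∃ q : Seminorm ℂ A, Continuous q ∧
      ∃ s : ℝ, 0 < s ∧ (∑' n : ℕ, ENNReal.ofReal s ^ (n + 1) * piNorm p q (n + 1)) ≠ ⊤) :
    ∀ p : Seminorm ℂ A, Continuous p → ∃ q : Seminorm ℂ A, Continuous q ∧
      ∃ r : ℝ, 0 < r ∧ (∑' n : ℕ, ENNReal.ofReal r ^ (n + 1) * muNorm p q (n + 1)) ≠ ⊤ := by
  intro p hp
  obtain ⟨q, hq, s, hs, hsum⟩ := hpi p hp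
  refine ⟨q, hq, s / 6, by positivity,
    ne_top_of_le_ne_top hsum (ENNReal.tsum_le_tsum fun n => ?_)⟩
  have hr : ENNReal.ofReal (s / 6) * 6 = ENNReal.ofReal s := by
    rw [← ENNReal.ofReal_ofNat 6, ← ENNReal.ofReal_mul (by positivity),
      div_mul_cancel₀ s (by norm_num)]
  calc ENNReal.ofReal (s / 6) ^ (n + 1) * muNorm p q (n + 1)
      ≤ ENNReal.ofReal (s / 6) ^ (n + 1) * (6 ^ (n + 1) * piNorm p q (n + 1)) := by
        gcongr; exact muNorm_le_six_pow_mul_piNorm p q (n + 1)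
    _ = ENNReal.ofReal s ^ (n + 1) * piNorm p q (n + 1) := by rw [← mul_assoc, ← mul_pow, hr]

theorem stmt4 {A : Type*} [CommRing A] [Algebra ℂ A]
    [TopologicalSpace A] [IsTopologicalRing A] [ContinuousSMul ℂ A]
    (hpi : ∀ p : Seminorm ℂ A, Continuous p → ∃ q : Seminorm ℂ A, Continuous q ∧
      ∃ s : ℝ, 0 < s ∧ (∑' n : ℕ, ENNReal.ofReal s ^ (n + 1) * piNorm p q (n + 1)) ≠ ⊤) :
    ∀ p : Seminorm ℂ A, Continuous p → ∃ q : Seminorm ℂ A, Continuous q ∧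
      ∃ r : ℝ, 0 < r ∧ (∑' n : ℕ, ENNReal.ofReal r ^ (n + 1) * muNorm p q (n + 1)) ≠ ⊤ :=
  stmt4_general hpi
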